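/- For distinct x, y ∈ (0, π/2), the logarithmic mean satisfies L(1/sin x, 1/sin y) ≥ 1/sin((x+y)/2). -/

import Mathlib

noncomputable def logMean (a b : ℝ) : ℝ := (a - b) / (Real.log a - Real.log b)

open Real

/-!
The logarithmic mean dominates the geometric mean: writing `a = e^(m+u)`, `b = e^(m-u)` turns
`L(a, b)` into `e^m · sinh u / u` and `√(ab)` into `e^m`. Hence
`L(1/sin x, 1/sin y) ≥ 1/√(sin x sin y)`, and
`sin x sin y = (cos (x - y) - cos (x + y)) / 2 ≤ sin² ((x + y) / 2)`.
-/

theorem logMean_comm (a b : ℝ) : logMean a b = logMean b a := by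
  unfold logMean
  rw [← neg_sub b a, ← neg_sub (log b) (log a), neg_div_neg_eq]

theorem logMean_exp_add_exp_sub (m : ℝ) {u : ℝ} (hu : u ≠ 0) :
    logMean (exp (m + u)) (exp (m - u)) = exp m * (sinh u / u) := by
  unfold logMean
  rw [log_exp, log_exp, show m + u - (m - u) = 2 * u by ring, sinh_eq, exp_add, exp_sub, exp_neg]
  field_simp

theorem sqrt_mul_lt_logMean {a b : ℝ} (ha : 0 < a) (hb : 0 < b) (hab : a ≠ b) :
    √(a * b) < logMean a b := by
  wlog hba : b < a generalizing a b
  · rw [logMean_comm, mul_comm]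
    exact this hb ha hab.symm (hab.lt_or_gt.resolve_right hba)
  set m := (log a + log b) / 2
  set u := (log a - log b) / 2
  have hu : 0 < u := by have := log_lt_log hb hba; simp only [u]; linarith
  have hexp_a : exp (m + u) = a := by rw [show m + u = log a by ring, exp_log ha]
  have hexp_b : exp (m - u) = b := by rw [show m - u = log b by ring, exp_log hb]
  have hsqrt : √(a * b) = exp m := by
    rw [← hexp_a, ← hexp_b, ← exp_add, show m + u + (m - u) = m + m by ring, exp_add,
      sqrt_mul_self (exp_pos m).le]
  rw [← hexp_a, ← hexp_b, logMean_exp_add_exp_sub m hu.ne', hexp_a, hexp_b, hsqrt]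
  exact lt_mul_of_one_lt_right (exp_pos m) ((one_lt_div hu).mpr (self_lt_sinh_iff.mpr hu))

theorem sin_mul_sin_le_sin_half_add_sq (x y : ℝ) : sin x * sin y ≤ sin ((x + y) / 2) ^ 2 := by
  have hprod : sin x * sin y = (cos (x - y) - cos (x + y)) / 2 := by
    rw [cos_sub, cos_add]; ring
  have hhalf : sin ((x + y) / 2) ^ 2 = (1 - cos (x + y)) / 2 := by
    rw [sin_sq_eq_half_sub, show 2 * ((x + y) / 2) = x + y by ring]; ring
  rw [hprod, hhalf]
  linarith [cos_le_one (x - y)]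

theorem stmt8 (x y : ℝ) (hx : x ∈ Set.Ioo 0 (π / 2)) (hy : y ∈ Set.Ioo 0 (π / 2))
    (hxy : x ≠ y) :
    logMean (1 / Real.sin x) (1 / Real.sin y) ≥ 1 / Real.sin ((x + y) / 2) := by
  have hIoo : Set.Ioo 0 (π / 2) ⊆ Set.Ioo 0 π := Set.Ioo_subset_Ioo_right (by linarith [pi_pos])
  have hsx : 0 < sin x := sin_pos_of_mem_Ioo (hIoo hx)
  have hsy : 0 < sin y := sin_pos_of_mem_Ioo (hIoo hy)
  have hsm : 0 < sin ((x + y) / 2) :=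
    sin_pos_of_mem_Ioo (hIoo ⟨by linarith [hx.1, hy.1], by linarith [hx.2, hy.2]⟩)
  have hIcc : Set.Ioo 0 (π / 2) ⊆ Set.Icc (-(π / 2)) (π / 2) :=
    Set.Ioo_subset_Icc_self.trans (Set.Icc_subset_Icc_left (by linarith [pi_pos]))
  have hne : sin x ≠ sin y := strictMonoOn_sin.injOn.ne (hIcc hx) (hIcc hy) hxy
  have hgeom : 1 / sin ((x + y) / 2) ≤ √(1 / sin x * (1 / sin y)) := by
    rw [le_sqrt' (one_div_pos.mpr hsm), div_pow, one_pow, one_div_mul_one_div]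
    exact one_div_le_one_div_of_le (by positivity) (sin_mul_sin_le_sin_half_add_sq x y)
  exact hgeom.trans (sqrt_mul_lt_logMean (by positivity) (by positivity) (by simpa using hne)).le
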